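/- Let L_0 = ∂_t and L_1 = e^{−t}(∂_t + ∂_x) be vector fields on ℝ³ (coordinates (t,x,u)). A smooth vector field C on ℝ³ satisfies [L_0, C] = 0 and [L_1, C] = 0 if and only if there exist C^∞ functions f, g, h : ℝ → ℝ such that C = f(u)e^{−x}∂_t + (g(u) + f(u)e^{−x})∂_x + h(u)∂_u. (Step of Case 2 of Section 4: the general form of a central element commuting with L_0 and L_1.) -/

import Mathlib

/-!
Since `L₀` is constant, `[L₀, C] = ∂_t C`. Writing `L₁ = e^{-t} (1, 1, 0)`, its derivative is
`e^{-t} • A` with `A w = -w_t (1, 1, 0)`, so `[L₁, C] = e^{-t} (∂_t C + ∂_x C - A C)`. Hence the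
two brackets vanish iff `C` does not depend on `t` and `∂_x C = A C`. This linear ODE in `x` has
unique solutions, and as `A² = -A` they are `exp (x A) c₀ = c₀ + (1 - e^{-x}) A c₀`, which is
the stated normal form with `c₀ = (f, g + f, h)(u)`.
-/

/-- Lie bracket of smooth vector fields on `ℝ³` (coordinates `(t,x,u)`), identified with
`C^∞` maps `ℝ³ → ℝ³`: `[X,Y](p) = (DY)(p)(X(p)) - (DX)(p)(Y(p))`. -/
noncomputable def lieBracket3 (X Y : ℝ × ℝ × ℝ → ℝ × ℝ × ℝ) : ℝ × ℝ × ℝ → ℝ × ℝ × ℝ :=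
  fun p => fderiv ℝ Y p (X p) - fderiv ℝ X p (Y p)

open Real Set

section LineDerivative

variable {E F : Type*} [NormedAddCommGroup E] [NormedSpace ℝ E]
  [NormedAddCommGroup F] [NormedSpace ℝ F] {f : E → F}

theorem hasDerivAt_comp_add_smul {p v : E} {s : ℝ} (hf : DifferentiableAt ℝ f (p + s • v)) :
    HasDerivAt (fun r : ℝ => f (p + r • v)) (fderiv ℝ f (p + s • v) v) s := by
  simpa [Function.comp_def] using
    hf.hasFDerivAt.comp_hasDerivAt s (((hasDerivAt_id s).smul_const v).const_add p)

theorem apply_add_smul_eq_of_fderiv_apply_eq_zero (hf : Differentiable ℝ f) {v : E}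
    (h : ∀ q, fderiv ℝ f q v = 0) (p : E) (s : ℝ) : f (p + s • v) = f p := by
  have hderiv (r : ℝ) : HasDerivAt (fun r : ℝ => f (p + r • v)) 0 r :=
    h (p + r • v) ▸ hasDerivAt_comp_add_smul (hf _)
  simpa using is_const_of_deriv_eq_zero (fun r => (hderiv r).differentiableAt)
    (fun r => (hderiv r).deriv) s 0

end LineDerivative

namespace CentralElement

/-- `DL₁(p) = e^{-t} • dL1`, where `L₁ = e^{-t}(∂_t + ∂_x)`. -/
noncomputable def dL1 : (ℝ × ℝ × ℝ) →L[ℝ] ℝ × ℝ × ℝ :=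
  -(ContinuousLinearMap.fst ℝ ℝ (ℝ × ℝ)).smulRight ((1, 1, 0) : ℝ × ℝ × ℝ)

@[simp]
theorem dL1_apply (w : ℝ × ℝ × ℝ) : dL1 w = (-w.1, -w.1, 0) := by
  simp [dL1]

theorem hasFDerivAt_L1 (p : ℝ × ℝ × ℝ) :
    HasFDerivAt (fun q : ℝ × ℝ × ℝ => (exp (-q.1), exp (-q.1), (0 : ℝ))) (exp (-p.1) • dL1) p := by
  have hexp : HasFDerivAt (fun q : ℝ × ℝ × ℝ => exp (-q.1))
      (exp (-p.1) • -ContinuousLinearMap.fst ℝ ℝ (ℝ × ℝ)) p :=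
    (ContinuousLinearMap.fst ℝ ℝ (ℝ × ℝ)).hasFDerivAt.neg.exp
  have hL1 : (fun q : ℝ × ℝ × ℝ => (exp (-q.1), exp (-q.1), (0 : ℝ)))
      = fun q => exp (-q.1) • ((1, 1, 0) : ℝ × ℝ × ℝ) := by
    ext q <;> simp
  rw [hL1]
  exact (hexp.smul_const _).congr_fderiv (by ext <;> simp [dL1])

theorem lieBracket3_const_left (v : ℝ × ℝ × ℝ) (Y : ℝ × ℝ × ℝ → ℝ × ℝ × ℝ) (p : ℝ × ℝ × ℝ) :
    lieBracket3 (fun _ => v) Y p = fderiv ℝ Y p v := by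
  simp [lieBracket3]

theorem lieBracket3_L1 (Y : ℝ × ℝ × ℝ → ℝ × ℝ × ℝ) (p : ℝ × ℝ × ℝ) :
    lieBracket3 (fun q => (exp (-q.1), exp (-q.1), 0)) Y p
      = exp (-p.1) • (fderiv ℝ Y p (1, 1, 0) - dL1 (Y p)) := by
  have hL1 : ((exp (-p.1), exp (-p.1), 0) : ℝ × ℝ × ℝ) = exp (-p.1) • (1, 1, 0) := by simp
  rw [lieBracket3, (hasFDerivAt_L1 p).fderiv, hL1, map_smul, smul_sub]
  rfl

theorem lieBracket3_L0_L1_eq_zero_iff (Y : ℝ × ℝ × ℝ → ℝ × ℝ × ℝ) :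
    (lieBracket3 (fun _ => (1, 0, 0)) Y = (fun _ => 0) ∧
      lieBracket3 (fun p => (exp (-p.1), exp (-p.1), 0)) Y = (fun _ => 0)) ↔
    ∀ p, fderiv ℝ Y p (1, 0, 0) = 0 ∧ fderiv ℝ Y p (0, 1, 0) = dL1 (Y p) := by
  simp only [funext_iff, lieBracket3_const_left, lieBracket3_L1, smul_eq_zero, exp_ne_zero,
    false_or, sub_eq_zero, ← forall_and]
  refine forall_congr' fun p => and_congr_right fun ht => ?_
  have hdiag : ((1, 1, 0) : ℝ × ℝ × ℝ) = (1, 0, 0) + (0, 1, 0) := by simp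
  rw [hdiag, map_add, ht, zero_add]

/-- `exp (s • dL1) y`, since `dL1 ∘ dL1 = -dL1`. -/
noncomputable def dL1Flow (y : ℝ × ℝ × ℝ) (s : ℝ) : ℝ × ℝ × ℝ :=
  y + (1 - exp (-s)) • dL1 y

theorem hasDerivAt_dL1Flow (y : ℝ × ℝ × ℝ) (s : ℝ) :
    HasDerivAt (dL1Flow y) (dL1 (dL1Flow y s)) s := by
  refine ((((hasDerivAt_neg s).exp.const_sub 1).smul_const (dL1 y)).const_add y).congr_deriv ?_
  ext <;> simp [dL1Flow] <;> ring

theorem eq_dL1Flow_of_hasDerivAt {c : ℝ → ℝ × ℝ × ℝ} (hc : ∀ s, HasDerivAt c (dL1 (c s)) s) :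
    c = dL1Flow (c 0) :=
  ODE_solution_unique_univ (v := fun _ => dL1) (s := fun _ => univ) (t₀ := 0)
    (fun _ => dL1.lipschitz.lipschitzOnWith) (fun s => ⟨hc s, trivial⟩)
    (fun s => ⟨hasDerivAt_dL1Flow _ s, trivial⟩) (by simp [dL1Flow])

theorem forall_fderiv_eq_iff_eq_dL1Flow {Y : ℝ × ℝ × ℝ → ℝ × ℝ × ℝ} (hY : Differentiable ℝ Y) :
    (∀ p, fderiv ℝ Y p (1, 0, 0) = 0 ∧ fderiv ℝ Y p (0, 1, 0) = dL1 (Y p)) ↔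
    ∀ t x u, Y (t, x, u) = dL1Flow (Y (0, 0, u)) x := by
  constructor
  · intro h t x u
    have hx (s : ℝ) : HasDerivAt (fun s : ℝ => Y ((0, 0, u) + s • (0, 1, 0)))
        (dL1 (Y ((0, 0, u) + s • (0, 1, 0)))) s :=
      (h _).2 ▸ hasDerivAt_comp_add_smul (hY _)
    calc Y (t, x, u) = Y ((0, x, u) + t • (1, 0, 0)) := by simp
      _ = Y (0, x, u) := apply_add_smul_eq_of_fderiv_apply_eq_zero hY (fun q => (h q).1) _ _
      _ = Y ((0, 0, u) + x • (0, 1, 0)) := by simp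
      _ = dL1Flow (Y (0, 0, u)) x := by simpa using congrFun (eq_dL1Flow_of_hasDerivAt hx) x
  · rintro h ⟨t, x, u⟩
    have hline (v : ℝ × ℝ × ℝ) := (hY (t, x, u)).hasFDerivAt.hasLineDerivAt v
    constructor
    · refine (hline _).unique ?_
      have hconst : (fun s : ℝ => Y ((t, x, u) + s • (1, 0, 0)))
          = fun _ => dL1Flow (Y (0, 0, u)) x := by
        ext1 s; simpa using h (t + s) x u
      rw [HasLineDerivAt, hconst]
      exact hasDerivAt_const _ _
    · refine (hline _).unique ?_
      have hflow : (fun s : ℝ => Y ((t, x, u) + s • (0, 1, 0)))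
          = fun s => dL1Flow (Y (0, 0, u)) (x + s) := by
        ext1 s; simpa using h t (x + s) u
      rw [HasLineDerivAt, hflow, h t x u]
      simpa only [add_zero] using (hasDerivAt_dL1Flow _ (x + 0)).comp_const_add x 0

end CentralElement

open CentralElement

theorem central_element_case2 (C : ℝ × ℝ × ℝ → ℝ × ℝ × ℝ)
    (hC : ContDiff ℝ (⊤ : ℕ∞) C) :
    (lieBracket3 (fun _ => (1, 0, 0)) C = (fun _ => 0) ∧
      lieBracket3 (fun p => (Real.exp (-p.1), Real.exp (-p.1), 0)) C = (fun _ => 0)) ↔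
    (∃ f g h : ℝ → ℝ, ContDiff ℝ (⊤ : ℕ∞) f ∧ ContDiff ℝ (⊤ : ℕ∞) g ∧
      ContDiff ℝ (⊤ : ℕ∞) h ∧
      C = fun p =>
        (f p.2.2 * Real.exp (-p.2.1),
         g p.2.2 + f p.2.2 * Real.exp (-p.2.1),
         h p.2.2)) := by
  rw [lieBracket3_L0_L1_eq_zero_iff, forall_fderiv_eq_iff_eq_dL1Flow (hC.differentiable (by simp))]
  constructor
  · intro hflow
    have hC0 : ContDiff ℝ (⊤ : ℕ∞) fun u => C (0, 0, u) :=
      hC.comp (contDiff_const.prodMk (contDiff_const.prodMk contDiff_id))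
    refine ⟨fun u => (C (0, 0, u)).1, fun u => (C (0, 0, u)).2.1 - (C (0, 0, u)).1,
      fun u => (C (0, 0, u)).2.2, contDiff_fst.comp hC0,
      ((contDiff_fst.comp contDiff_snd).comp hC0).sub (contDiff_fst.comp hC0),
      (contDiff_snd.comp contDiff_snd).comp hC0, ?_⟩
    ext1 ⟨t, x, u⟩
    rw [hflow]
    ext <;> simp [dL1Flow] <;> ring
  · rintro ⟨f, g, h, -, -, -, rfl⟩ t x u
    ext <;> simp [dL1Flow] <;> ring
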